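/- arXiv:1603.00672 — 2 statements merged into one kernel-verified Lean document; each statement's English description precedes it below -/
import Mathlib

section
/- For a finite field F_q and integers d ≥ 0, n ≥ 2, the number of monic n-th power-free polynomials of degree d in F_q[x] equals q^d if 0 ≤ d ≤ n-1, and equals q^d - q^{d-(n-1)} if d ≥ n. -/
open Polynomial UniqueFactorizationMonoid

section Aux

variable {F : Type*} [Field F]

/-- auxiliary: power-free predicate -/
def PFree (n : ℕ) (f : F[X]) : Prop := ∀ g : F[X], 0 < g.natDegree → ¬ g ^ n ∣ f

lemma exists_decomp (n : ℕ) (hn : 1 ≤ n) :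
    ∀ d (f : F[X]), f.natDegree = d → f.Monic →
      ∃ g h : F[X], g.Monic ∧ h.Monic ∧ PFree n h ∧ f = g ^ n * h := by
  intro d
  induction d using Nat.strong_induction_on with
  | _ d ih =>
    intro f hdeg hf
    by_cases hpf : PFree n f
    · exact ⟨1, f, monic_one, hf, hpf, by simp⟩
    · unfold PFree at hpf
      push_neg at hpf
      obtain ⟨g0, hg0pos, hg0dvd⟩ := hpf
      obtain ⟨p, hpm, hpi, hpdvd⟩ := g0.exists_monic_irreducible_factor
        (not_isUnit_of_natDegree_pos _ hg0pos)
      have hpn : p ^ n ∣ f := (pow_dvd_pow_of_dvd hpdvd n).trans hg0dvd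
      obtain ⟨f', rfl⟩ := hpn
      have hf' : f'.Monic := (hpm.pow n).of_mul_monic_left hf
      have hdegeq : (p ^ n * f').natDegree = n * p.natDegree + f'.natDegree := by
        rw [(hpm.pow n).natDegree_mul hf', natDegree_pow]
      have hpos : 0 < n * p.natDegree := Nat.mul_pos hn hpi.natDegree_pos
      have hlt : f'.natDegree < d := by omega
      obtain ⟨g, h, hg, hh, hph, heq⟩ := ih f'.natDegree hlt f' rfl hf'
      exact ⟨p * g, h, hpm.mul hg, hh, hph, by rw [heq, mul_pow]; ring⟩

lemma count_lt [DecidableEq F] {n : ℕ} {h p : F[X]} (hh : h ≠ 0) (hph : PFree n h)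
    (hpi : Irreducible p) : (normalizedFactors h).count p < n := by
  by_contra hcon
  push_neg at hcon
  have hrep : Multiset.replicate n p ≤ normalizedFactors h :=
    Multiset.le_count_iff_replicate_le.mp hcon
  have hd : p ^ n ∣ h := by
    have h1 : (Multiset.replicate n p).prod ∣ (normalizedFactors h).prod :=
      Multiset.prod_dvd_prod_of_le hrep
    rw [Multiset.prod_replicate] at h1
    exact h1.trans (prod_normalizedFactors hh).dvd
  exact hph p hpi.natDegree_pos hd

lemma decomp_unique {n : ℕ} (hn : 1 ≤ n) {g1 h1 g2 h2 : F[X]}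
    (hg1 : g1.Monic) (hh1 : h1.Monic) (hp1 : PFree n h1)
    (hg2 : g2.Monic) (hh2 : h2.Monic) (hp2 : PFree n h2)
    (heq : g1 ^ n * h1 = g2 ^ n * h2) : g1 = g2 ∧ h1 = h2 := by
  classical
  have hg1z := hg1.ne_zero
  have hg2z := hg2.ne_zero
  have hh1z := hh1.ne_zero
  have hh2z := hh2.ne_zero
  have hNF : n • normalizedFactors g1 + normalizedFactors h1 =
      n • normalizedFactors g2 + normalizedFactors h2 := by
    have h0 := congrArg normalizedFactors heq
    rwa [normalizedFactors_mul (pow_ne_zero n hg1z) hh1z,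
      normalizedFactors_mul (pow_ne_zero n hg2z) hh2z,
      normalizedFactors_pow, normalizedFactors_pow] at h0
  have hcount : ∀ p : F[X], (normalizedFactors g1).count p = (normalizedFactors g2).count p := by
    intro p
    have hc := congrArg (Multiset.count p) hNF
    simp only [Multiset.count_add, Multiset.count_nsmul] at hc
    by_cases hp : p ∈ normalizedFactors g1 ∨ p ∈ normalizedFactors g2
    · have hpi : Irreducible p := by
        rcases hp with hp | hp
        · exact irreducible_of_normalized_factor p hp
        · exact irreducible_of_normalized_factor p hp
      have l1 := count_lt hh1z hp1 hpi
      have l2 := count_lt hh2z hp2 hpi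
      have hdv : (normalizedFactors g1).count p + (normalizedFactors h1).count p / n =
          (normalizedFactors g2).count p + (normalizedFactors h2).count p / n := by
        rw [← Nat.mul_add_div hn, ← Nat.mul_add_div hn, hc]
      rw [Nat.div_eq_of_lt l1, Nat.div_eq_of_lt l2] at hdv
      omega
    · push_neg at hp
      rw [Multiset.count_eq_zero_of_notMem hp.1, Multiset.count_eq_zero_of_notMem hp.2]
  have hNFg : normalizedFactors g1 = normalizedFactors g2 := Multiset.ext.mpr hcount
  have hassoc : Associated g1 g2 :=
    (prod_normalizedFactors hg1z).symm.trans (hNFg ▸ prod_normalizedFactors hg2z)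
  have hgg : g1 = g2 := eq_of_monic_of_associated hg1 hg2 hassoc
  subst hgg
  exact ⟨rfl, mul_left_cancel₀ (pow_ne_zero n hg1z) heq⟩

end Aux

section Card

variable (F : Type*) [Field F] [Fintype F]

lemma card_monic (e : ℕ) :
    Nat.card {f : F[X] // f.Monic ∧ f.natDegree = e} = Fintype.card F ^ e := by
  rw [Nat.card_congr ((monicEquivDegreeLT e).trans (degreeLTEquiv F e).toEquiv)]
  simp [Nat.card_eq_fintype_card]

instance finite_monic (e : ℕ) : Finite {f : F[X] // f.Monic ∧ f.natDegree = e} :=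
  Finite.of_equiv _ ((monicEquivDegreeLT e).trans (degreeLTEquiv F e).toEquiv).symm

instance finite_pfree (n e : ℕ) :
    Finite {f : F[X] // f.Monic ∧ f.natDegree = e ∧ PFree n f} := by
  apply Finite.of_injective
    (fun f : {f : F[X] // f.Monic ∧ f.natDegree = e ∧ PFree n f} =>
      (⟨f.1, f.2.1, f.2.2.1⟩ : {f : F[X] // f.Monic ∧ f.natDegree = e}))
  intro a b hab
  simpa [Subtype.ext_iff] using hab

lemma key (n : ℕ) (hn : 1 ≤ n) (d : ℕ) :
    ∑ e ∈ Finset.range (d / n + 1),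
      Fintype.card F ^ e *
        Nat.card {f : F[X] // f.Monic ∧ f.natDegree = d - n * e ∧ PFree n f}
    = Fintype.card F ^ d := by
  classical
  have hmain : (Σ e : Fin (d / n + 1),
      {g : F[X] // g.Monic ∧ g.natDegree = (e : ℕ)} ×
        {h : F[X] // h.Monic ∧ h.natDegree = d - n * (e : ℕ) ∧ PFree n h}) ≃
      {f : F[X] // f.Monic ∧ f.natDegree = d} := by
    refine Equiv.ofBijective
      (fun x => ⟨x.2.1.1 ^ n * x.2.2.1, (x.2.1.2.1.pow n).mul x.2.2.2.1, ?_⟩) ⟨?_, ?_⟩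
    · obtain ⟨e, ⟨g, hg, hgd⟩, ⟨h, hh, hhd, hph⟩⟩ := x
      simp only at *
      rw [((hg.pow n)).natDegree_mul hh, natDegree_pow, hgd, hhd]
      have hle : n * (e : ℕ) ≤ d := by
        have h1 : (e : ℕ) ≤ d / n := by have := e.isLt; omega
        have h2 := Nat.div_mul_le_self d n
        calc n * (e : ℕ) ≤ n * (d / n) := Nat.mul_le_mul_left n h1
          _ = d / n * n := by ring
          _ ≤ d := h2
      omega
    · rintro ⟨e1, ⟨g1, hg1, hd1⟩, ⟨h1, hh1, hdh1, hp1⟩⟩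
        ⟨e2, ⟨g2, hg2, hd2⟩, ⟨h2, hh2, hdh2, hp2⟩⟩ hfe
      simp only [Subtype.mk.injEq] at hfe
      obtain ⟨hgg, hhh⟩ := decomp_unique hn hg1 hh1 hp1 hg2 hh2 hp2 hfe
      subst hgg hhh
      have he : e1 = e2 := Fin.ext (by rw [← hd1, ← hd2])
      subst he
      rfl
    · rintro ⟨f, hf, hfd⟩
      obtain ⟨g, h, hg, hh, hph, heq⟩ := exists_decomp n hn f.natDegree f rfl hf
      have hdeg : n * g.natDegree + h.natDegree = d := by
        rw [← hfd, heq, ((hg.pow n)).natDegree_mul hh, natDegree_pow]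
      have he : g.natDegree < d / n + 1 := by
        have h1 : g.natDegree * n ≤ d := by rw [Nat.mul_comm]; omega
        have h2 : g.natDegree ≤ d / n := (Nat.le_div_iff_mul_le hn).mpr h1
        omega
      refine ⟨⟨⟨g.natDegree, he⟩, ⟨g, hg, rfl⟩,
        ⟨h, hh, show h.natDegree = d - n * g.natDegree by omega, hph⟩⟩, ?_⟩
      exact Subtype.ext heq.symm
  have h1 : Nat.card (Σ e : Fin (d / n + 1),
      {g : F[X] // g.Monic ∧ g.natDegree = (e : ℕ)} ×
        {h : F[X] // h.Monic ∧ h.natDegree = d - n * (e : ℕ) ∧ PFree n h})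
      = Fintype.card F ^ d := by
    rw [Nat.card_congr hmain, card_monic]
  rw [← h1]
  letI : ∀ e : Fin (d / n + 1), Fintype {g : F[X] // g.Monic ∧ g.natDegree = (e : ℕ)} :=
    fun e => Fintype.ofFinite _
  letI : ∀ e : Fin (d / n + 1),
      Fintype {h : F[X] // h.Monic ∧ h.natDegree = d - n * (e : ℕ) ∧ PFree n h} :=
    fun e => Fintype.ofFinite _
  rw [Nat.card_eq_fintype_card, Fintype.card_sigma, Finset.sum_range]
  refine Finset.sum_congr rfl fun e _ => ?_
  rw [Fintype.card_prod,
    ← Nat.card_eq_fintype_card (α := {g : F[X] // g.Monic ∧ g.natDegree = (e : ℕ)}),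
    ← Nat.card_eq_fintype_card
      (α := {h : F[X] // h.Monic ∧ h.natDegree = d - n * (e : ℕ) ∧ PFree n h}),
    card_monic]

end Card

/-- The number of monic `n`-th power-free polynomials of degree `d` over `F_q`
equals `q^d` if `d ≤ n-1`, and `q^d - q^(d-(n-1))` if `d ≥ n`. -/
theorem stmt_0 (F : Type*) [Field F] [Fintype F] (q : ℕ) (hq : Fintype.card F = q)
    (n d : ℕ) (hn : 2 ≤ n) :
    Nat.card {f : Polynomial F // f.Monic ∧ f.natDegree = d ∧
      ∀ g : Polynomial F, 0 < g.natDegree → ¬ g ^ n ∣ f} =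
    if d ≤ n - 1 then q ^ d else q ^ d - q ^ (d - (n - 1)) := by
  subst hq
  have hn1 : 1 ≤ n := by omega
  show Nat.card {f : F[X] // f.Monic ∧ f.natDegree = d ∧ PFree n f} = _
  by_cases hd : d ≤ n - 1
  · rw [if_pos hd]
    have hA := key F n hn1 d
    have hdn : d / n = 0 := Nat.div_eq_of_lt (by omega)
    rw [hdn, Finset.sum_range_one] at hA
    simpa using hA
  · rw [if_neg hd]
    have hnd : n ≤ d := by omega
    have hA := key F n hn1 d
    have hB := key F n hn1 (d - n)
    set q := Fintype.card F with hqdef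
    have hdiv : d / n = (d - n) / n + 1 := by
      conv_lhs => rw [show d = (d - n) + n by omega]
      rw [Nat.add_div_right _ (by omega)]
    rw [show d / n + 1 = ((d - n) / n + 1) + 1 by omega, Finset.sum_range_succ'] at hA
    have hsum : ∑ e ∈ Finset.range ((d - n) / n + 1),
        q ^ (e + 1) * Nat.card {f : F[X] // f.Monic ∧ f.natDegree = d - n * (e + 1) ∧ PFree n f}
        = q ^ (d - n + 1) := by
      calc ∑ e ∈ Finset.range ((d - n) / n + 1),
          q ^ (e + 1) * Nat.card {f : F[X] // f.Monic ∧ f.natDegree = d - n * (e + 1) ∧ PFree n f}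
          = ∑ e ∈ Finset.range ((d - n) / n + 1),
            q * (q ^ e * Nat.card {f : F[X] // f.Monic ∧ f.natDegree = d - n - n * e ∧ PFree n f}) := by
            refine Finset.sum_congr rfl fun e _ => ?_
            have hme : n * (e + 1) = n * e + n := by ring
            have hsub : d - n * (e + 1) = d - n - n * e := by omega
            rw [hsub]; ring
        _ = q * q ^ (d - n) := by rw [← Finset.mul_sum, hB]
        _ = q ^ (d - n + 1) := by rw [pow_succ]; ring
    rw [hsum] at hA
    simp only [pow_zero, one_mul, Nat.mul_zero, Nat.sub_zero] at hA
    have hexp : d - n + 1 = d - (n - 1) := by omega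
    rw [hexp] at hA
    have hle : q ^ (d - (n - 1)) ≤ q ^ d := Nat.pow_le_pow_right Fintype.card_pos (by omega)
    omega
end

section
/- Let F_q be a finite field, N ≥ 2, and d ≥ 0. The set of monic 4-th power-free polynomials f = f_1 f_2^2 f_3^3 (with f_1, f_2, f_3 monic square-free and pairwise coprime) satisfying deg(f_1) + N·deg(f_2) + (N+1)·deg(f_3) = d is equal to the set of polynomials of the form g_1 g_2^2 with g_1, g_2 monic square-free (not necessarily coprime) and deg(g_1) + N·deg(g_2) = d. -/
open Polynomial

/-- The set of monic 4-th power-free polynomials `f = f₁ f₂² f₃³` (with the `fᵢ` monic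
square-free and pairwise coprime) of weighted degree `d` with respect to the weight
`(1, N, N+1)` coincides with the set of products `g₁ g₂²` with `g₁, g₂` monic square-free
(not necessarily coprime) and `deg g₁ + N·deg g₂ = d`. -/
theorem stmt_2 (F : Type*) [Field F] [Fintype F] (N d : ℕ) (hN : 2 ≤ N) :
    {f : Polynomial F | ∃ f₁ f₂ f₃ : Polynomial F,
        f₁.Monic ∧ f₂.Monic ∧ f₃.Monic ∧
        Squarefree f₁ ∧ Squarefree f₂ ∧ Squarefree f₃ ∧
        IsCoprime f₁ f₂ ∧ IsCoprime f₁ f₃ ∧ IsCoprime f₂ f₃ ∧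
        f = f₁ * f₂ ^ 2 * f₃ ^ 3 ∧
        f₁.natDegree + N * f₂.natDegree + (N + 1) * f₃.natDegree = d} =
    {f : Polynomial F | ∃ g₁ g₂ : Polynomial F,
        g₁.Monic ∧ g₂.Monic ∧ Squarefree g₁ ∧ Squarefree g₂ ∧
        f = g₁ * g₂ ^ 2 ∧ g₁.natDegree + N * g₂.natDegree = d} := by
  classical
  ext f
  simp only [Set.mem_setOf_eq]
  constructor
  · rintro ⟨f₁, f₂, f₃, hm1, hm2, hm3, hs1, hs2, hs3, hc12, hc13, hc23, rfl, hdeg⟩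
    refine ⟨f₁ * f₃, f₂ * f₃, hm1.mul hm3, hm2.mul hm3,
      squarefree_mul_iff.mpr ⟨hc13.isRelPrime, hs1, hs3⟩,
      squarefree_mul_iff.mpr ⟨hc23.isRelPrime, hs2, hs3⟩, by ring, ?_⟩
    rw [hm1.natDegree_mul hm3, hm2.natDegree_mul hm3, Nat.mul_add]
    rw [Nat.add_mul, one_mul] at hdeg
    omega
  · rintro ⟨g₁, g₂, hm1, hm2, hs1, hs2, rfl, hdeg⟩
    set f₃ := gcd g₁ g₂ with hf₃def
    have hg₁0 : g₁ ≠ 0 := hm1.ne_zero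
    have hf₃0 : f₃ ≠ 0 := fun h => hg₁0 ((gcd_eq_zero_iff _ _).mp h).1
    have hm3 : f₃.Monic := by
      have := Polynomial.monic_normalize (p := f₃) hf₃0
      rwa [normalize_gcd] at this
    obtain ⟨f₁, h1⟩ : f₃ ∣ g₁ := gcd_dvd_left g₁ g₂
    obtain ⟨f₂, h2⟩ : f₃ ∣ g₂ := gcd_dvd_right g₁ g₂
    have hm1' : f₁.Monic := by
      have : (f₃ * f₁).Monic := h1 ▸ hm1
      exact hm3.of_mul_monic_left this
    have hm2' : f₂.Monic := by
      have : (f₃ * f₂).Monic := h2 ▸ hm2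
      exact hm3.of_mul_monic_left this
    have hs1' : Squarefree f₁ := hs1.squarefree_of_dvd ⟨f₃, by rw [h1]; ring⟩
    have hs2' : Squarefree f₂ := hs2.squarefree_of_dvd ⟨f₃, by rw [h2]; ring⟩
    have hs3 : Squarefree f₃ := hs1.squarefree_of_dvd ⟨f₁, h1⟩
    have hc13 : IsCoprime f₁ f₃ :=
      (IsRelPrime.of_squarefree_mul (h1 ▸ hs1)).isCoprime.symm
    have hc23 : IsCoprime f₂ f₃ :=
      (IsRelPrime.of_squarefree_mul (h2 ▸ hs2)).isCoprime.symm
    have hc12 : IsCoprime f₁ f₂ := by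
      refine IsRelPrime.isCoprime (fun c hcf₁ hcf₂ => ?_)
      obtain ⟨e₁, he₁⟩ := hcf₁
      obtain ⟨e₂, he₂⟩ := hcf₂
      have hdvd : c * f₃ ∣ f₃ := dvd_gcd ⟨e₁, by rw [h1, he₁]; ring⟩ ⟨e₂, by rw [h2, he₂]; ring⟩
      have : c ∣ 1 := by
        have := (mul_dvd_mul_iff_right hf₃0).mp (by rwa [one_mul] : c * f₃ ∣ 1 * f₃)
        exact this
      exact isUnit_of_dvd_one this
    refine ⟨f₁, f₂, f₃, hm1', hm2', hm3, hs1', hs2', hs3, hc12, hc13, hc23,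
      by rw [h1, h2]; ring, ?_⟩
    rw [h1, h2, hm3.natDegree_mul hm1', hm3.natDegree_mul hm2', Nat.mul_add] at hdeg
    rw [Nat.add_mul, one_mul]
    omega
end
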